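/- arXiv:2402.02494 — 2 statements merged into one kernel-verified Lean document; each statement's English description precedes it below -/
import Mathlib

section
/- Let K₀ be a bounded linear operator on a Hilbert space with ‖K₀‖ ≤ 1 such that I − K₀ is boundedly invertible, and let p_m(z) = 2·∑_{k=1}^{m-1}(1 − k/m)·z^{k−1}. Then ‖p_m(K₀)‖ ≤ 4·‖(I − K₀)^{-1}‖. -/
/-!
Multiplying by `1 - a` telescopes the weighted sum:
`(1 - a) * ∑_{k=1}^{m-1} (m - k) a^(k-1) = ∑_{k<m} (1 - a^k)`.
Hence, for a left inverse `J` of `1 - a`, `p_m(a) = J * ((2/m) • ∑_{k<m} (1 - a^k))`, and each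
`‖1 - a^k‖ ≤ 2` once `‖a‖ ≤ 1`, which gives the bound `(2/m) * 2m * ‖J‖ = 4 ‖J‖`.
-/

open Finset

section Algebra

variable {R A : Type*} [CommRing R] [Ring A] [Algebra R A]

theorem sum_Ico_one_sub_smul_pow_succ (a : A) (n : ℕ) :
    ∑ k ∈ Ico 1 (n + 1), ((n + 1 : ℕ) - k : R) • a ^ (k - 1)
      = ∑ k ∈ Ico 1 n, ((n : R) - k) • a ^ (k - 1) + ∑ i ∈ range n, a ^ i := by
  have hshift : ∑ k ∈ Ico 1 (n + 1), a ^ (k - 1) = ∑ i ∈ range n, a ^ i := by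
    rw [sum_Ico_eq_sum_range]; simp
  have hlast : ∑ k ∈ Ico 1 (n + 1), ((n : R) - k) • a ^ (k - 1)
      = ∑ k ∈ Ico 1 n, ((n : R) - k) • a ^ (k - 1) := by
    rcases Nat.eq_zero_or_pos n with rfl | hn
    · simp
    · rw [sum_Ico_succ_top hn, sub_self, zero_smul, add_zero]
  rw [← hshift, ← hlast, ← sum_add_distrib]
  refine sum_congr rfl fun k _ => ?_
  rw [Nat.cast_succ, add_sub_right_comm, add_smul, one_smul]

theorem one_sub_mul_sum_Ico_sub_smul_pow (a : A) (n : ℕ) :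
    (1 - a) * ∑ k ∈ Ico 1 n, ((n : R) - k) • a ^ (k - 1) = ∑ k ∈ range n, (1 - a ^ k) := by
  induction n with
  | zero => simp
  | succ n ih =>
    rw [sum_Ico_one_sub_smul_pow_succ, mul_add, ih, mul_neg_geom_sum, sum_range_succ]

end Algebra

section Normed

variable {A : Type*} [NormedRing A]

theorem norm_pow_le_one (h1 : ‖(1 : A)‖ ≤ 1) {a : A} (ha : ‖a‖ ≤ 1) (k : ℕ) : ‖a ^ k‖ ≤ 1 := by
  rcases Nat.eq_zero_or_pos k with rfl | hk
  · simpa using h1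
  · exact (norm_pow_le' a hk).trans (pow_le_one₀ (norm_nonneg a) ha)

theorem norm_sum_range_one_sub_pow_le (h1 : ‖(1 : A)‖ ≤ 1) {a : A} (ha : ‖a‖ ≤ 1) (n : ℕ) :
    ‖∑ k ∈ range n, (1 - a ^ k)‖ ≤ 2 * n := by
  calc ‖∑ k ∈ range n, (1 - a ^ k)‖ ≤ ∑ k ∈ range n, ‖1 - a ^ k‖ := norm_sum_le _ _
    _ ≤ ∑ _k ∈ range n, (1 + 1 : ℝ) :=
        sum_le_sum fun k _ => (norm_sub_le _ _).trans (add_le_add h1 (norm_pow_le_one h1 ha k))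
    _ = 2 * n := by rw [sum_const, card_range, nsmul_eq_mul]; ring

variable {𝕜 : Type*} [RCLike 𝕜] [NormedAlgebra 𝕜 A]

theorem norm_sum_Ico_two_mul_one_sub_div_smul_pow_le (h1 : ‖(1 : A)‖ ≤ 1) {a J : A}
    (ha : ‖a‖ ≤ 1) (hJ : J * (1 - a) = 1) (m : ℕ) :
    ‖∑ k ∈ Ico 1 m, ((2 : 𝕜) * (1 - (k : 𝕜) / m)) • a ^ (k - 1)‖ ≤ 4 * ‖J‖ := by
  have hrescale : ∑ k ∈ Ico 1 m, ((2 : 𝕜) * (1 - (k : 𝕜) / m)) • a ^ (k - 1)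
      = (2 / m : 𝕜) • ∑ k ∈ Ico 1 m, ((m : 𝕜) - k) • a ^ (k - 1) := by
    rw [smul_sum]
    refine sum_congr rfl fun k hk => ?_
    have hm : (m : 𝕜) ≠ 0 := Nat.cast_ne_zero.mpr (Nat.ne_zero_of_lt (mem_Ico.mp hk).2)
    rw [smul_smul]
    field_simp
  have hfactor : ∑ k ∈ Ico 1 m, ((2 : 𝕜) * (1 - (k : 𝕜) / m)) • a ^ (k - 1)
      = J * ((2 / m : 𝕜) • ∑ k ∈ range m, (1 - a ^ k)) := by
    rw [hrescale, ← one_sub_mul_sum_Ico_sub_smul_pow (R := 𝕜), ← mul_smul_comm, ← mul_assoc,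
      hJ, one_mul]
  have hbound : ‖(2 / m : 𝕜) • ∑ k ∈ range m, (1 - a ^ k)‖ ≤ 4 := by
    rw [norm_smul, norm_div, RCLike.norm_ofNat, RCLike.norm_natCast]
    calc 2 / (m : ℝ) * ‖∑ k ∈ range m, (1 - a ^ k)‖ ≤ 2 / m * (2 * m) := by
          gcongr; exact norm_sum_range_one_sub_pow_le h1 ha m
      _ ≤ 4 := by
          rcases Nat.eq_zero_or_pos m with rfl | hm
          · norm_num
          · field_simp; norm_num
  calc _ = ‖J * ((2 / m : 𝕜) • ∑ k ∈ range m, (1 - a ^ k))‖ := by rw [hfactor]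
    _ ≤ ‖J‖ * 4 := (norm_mul_le _ _).trans (by gcongr)
    _ = 4 * ‖J‖ := mul_comm _ _

end Normed

theorem stmt1_general {H : Type*} [NormedAddCommGroup H] [InnerProductSpace ℂ H]
    (K₀ : H →L[ℂ] H) (hK : ‖K₀‖ ≤ 1) (J : H →L[ℂ] H)
    (hJ₂ : J * (1 - K₀) = 1) (m : ℕ) :
    ‖∑ k ∈ Finset.Ico 1 m, ((2 : ℂ) * (1 - (k : ℂ) / m)) • K₀ ^ (k - 1)‖ ≤ 4 * ‖J‖ :=
  norm_sum_Ico_two_mul_one_sub_div_smul_pow_le ContinuousLinearMap.norm_id_le hK hJ₂ m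

/-- If `K₀` is a bounded operator on a complex Hilbert space with `‖K₀‖ ≤ 1`
such that `I − K₀` is boundedly invertible with inverse `J`, then
`‖p_m(K₀)‖ ≤ 4·‖(I − K₀)⁻¹‖` where `p_m(z) = 2·∑_{k=1}^{m-1}(1 − k/m)·z^{k−1}`. -/
theorem stmt1 {H : Type*} [NormedAddCommGroup H] [InnerProductSpace ℂ H] [CompleteSpace H]
    (K₀ : H →L[ℂ] H) (hK : ‖K₀‖ ≤ 1) (J : H →L[ℂ] H)
    (hJ₁ : (1 - K₀) * J = 1) (hJ₂ : J * (1 - K₀) = 1) (m : ℕ) (hm : 1 ≤ m) :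
    ‖∑ k ∈ Finset.Ico 1 m, ((2 : ℂ) * (1 - (k : ℂ) / m)) • K₀ ^ (k - 1)‖ ≤ 4 * ‖J‖ :=
  stmt1_general K₀ hK J hJ₂ m
end

section
/- Let U be a unitary operator on a Hilbert space H with spectral measure E, let θ ∈ (0, π), and let f ∈ H satisfy E({e^{it} : |t| ≤ θ}) f = 0. Then ‖(1/m)·∑_{k=0}^{m-1} U^k f‖² ≤ 2·‖f‖² / ((1 − cos θ)·m²) for all m ≥ 1. -/
open Finset MeasureTheory Real

/-- A (projection-valued) spectral measure for a unitary operator `U` on a complex Hilbert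
space, recording the scalar spectral measures `μ_f(Δ) = ‖E(Δ)f‖²` and the property
`‖P(U)f‖² = ∫ |P(z)|² dμ_f(z)` of the functional calculus for polynomials `P`. -/
structure UnitarySpectralMeasure {H : Type*} [NormedAddCommGroup H] [InnerProductSpace ℂ H]
    [CompleteSpace H] (U : H →L[ℂ] H) where
  E : Set ℂ → (H →L[ℂ] H)
  isIdem : ∀ Δ, IsIdempotentElem (E Δ)
  isSelfAdj : ∀ Δ, IsSelfAdjoint (E Δ)
  map_inter : ∀ Δ₁ Δ₂ : Set ℂ, MeasurableSet Δ₁ → MeasurableSet Δ₂ →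
    E (Δ₁ ∩ Δ₂) = E Δ₁ * E Δ₂
  map_univ : E Set.univ = 1
  commutes : ∀ Δ, E Δ * U = U * E Δ
  μ : H → Measure ℂ
  μ_apply : ∀ (f : H) (Δ : Set ℂ), MeasurableSet Δ →
    μ f Δ = ENNReal.ofReal (‖E Δ f‖ ^ 2)
  μ_circle : ∀ f : H, μ f {z : ℂ | ‖z‖ ≠ 1} = 0
  calc_poly : ∀ (P : Polynomial ℂ) (f : H),
    ‖Polynomial.aeval U P f‖ ^ 2 = ∫ z, ‖P.eval z‖ ^ 2 ∂(μ f)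

/-- If `U` is unitary with spectral measure `E`, `θ ∈ (0, π)` and
`E(S_θ)f = 0` where `S_θ = {e^{it} : |t| ≤ θ}`, then
`‖(1/m)∑_{k<m} U^k f‖² ≤ 2‖f‖² / ((1 − cos θ)·m²)` for all `m ≥ 1`. -/
theorem stmt4 {H : Type*} [NormedAddCommGroup H] [InnerProductSpace ℂ H] [CompleteSpace H]
    (U : H →L[ℂ] H) (hU : U ∈ unitary (H →L[ℂ] H)) (S : UnitarySpectralMeasure U)
    (θ : ℝ) (hθ : θ ∈ Set.Ioo 0 π) (f : H)
    (hf : S.E {z : ℂ | ∃ t : ℝ, |t| ≤ θ ∧ z = Complex.exp (t * Complex.I)} f = 0)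
    (m : ℕ) (hm : 1 ≤ m) :
    ‖(m : ℂ)⁻¹ • ∑ k ∈ Finset.range m, (U ^ k) f‖ ^ 2 ≤
      2 * ‖f‖ ^ 2 / ((1 - Real.cos θ) * m ^ 2) := by
  obtain ⟨hθ0, hθπ⟩ := hθ
  set A : Set ℂ := {z : ℂ | ∃ t : ℝ, |t| ≤ θ ∧ z = Complex.exp (t * Complex.I)} with hAdef
  have hcos1 : Real.cos θ < 1 := by
    have := Real.cos_lt_cos_of_nonneg_of_le_pi le_rfl hθπ.le hθ0
    simpa using this
  have hC : (0:ℝ) < 1 - Real.cos θ := by linarith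
  set C : ℝ := 2 / (1 - Real.cos θ) with hCdef
  have hCpos : 0 < C := by positivity
  set P : Polynomial ℂ := ∑ k ∈ Finset.range m, (Polynomial.X : Polynomial ℂ) ^ k with hP
  have hsum : (∑ k ∈ Finset.range m, (U ^ k) f) = Polynomial.aeval U P f := by
    simp [hP, map_sum, map_pow, ContinuousLinearMap.sum_apply]
  have hμuniv : S.μ f Set.univ = ENNReal.ofReal (‖f‖ ^ 2) := by
    rw [S.μ_apply f _ MeasurableSet.univ, S.map_univ]
    simp
  haveI : IsFiniteMeasure (S.μ f) := ⟨by rw [hμuniv]; exact ENNReal.ofReal_lt_top⟩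
  have hAmeas : MeasurableSet A := by
    have himg : A = (fun t : ℝ => Complex.exp (t * Complex.I)) '' Set.Icc (-θ) θ := by
      ext z
      simp only [hAdef, Set.mem_setOf_eq, Set.mem_image, Set.mem_Icc, ← abs_le]
      constructor
      · rintro ⟨t, ht, rfl⟩; exact ⟨t, ht, rfl⟩
      · rintro ⟨t, ht, rfl⟩; exact ⟨t, ht, rfl⟩
    rw [himg]
    exact ((isCompact_Icc.image (by fun_prop)).isClosed).measurableSet
  have hμA : S.μ f A = 0 := by
    rw [S.μ_apply f A hAmeas, hf]
    simp
  have h0 : S.μ f (A ∪ {z : ℂ | ‖z‖ ≠ 1}) = 0 :=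
    measure_union_null hμA (S.μ_circle f)
  have hae : ∀ᵐ z ∂(S.μ f), ‖P.eval z‖ ^ 2 ≤ C := by
    have hnm : ∀ᵐ z ∂(S.μ f), z ∉ A ∪ {z : ℂ | ‖z‖ ≠ 1} :=
      measure_eq_zero_iff_ae_notMem.mp h0
    filter_upwards [hnm] with z hz
    rw [Set.mem_union, not_or] at hz
    obtain ⟨hzA, hzB⟩ := hz
    have habs : ‖z‖ = 1 := not_not.mp hzB
    set t := Complex.arg z with htdef
    have hzt : z = Complex.exp (t * Complex.I) := by
      conv_lhs => rw [← Complex.norm_mul_exp_arg_mul_I z]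
      rw [habs, Complex.ofReal_one, one_mul]
    have ht : θ < |t| := by
      by_contra h
      push_neg at h
      exact hzA ⟨t, h, hzt⟩
    have htπ : |t| ≤ π := Complex.abs_arg_le_pi z
    have hcost : Real.cos t < Real.cos θ := by
      rw [← Real.cos_abs t]
      exact Real.cos_lt_cos_of_nonneg_of_le_pi hθ0.le htπ ht
    have hre : z.re = Real.cos t := by
      rw [hzt]; exact Complex.exp_ofReal_mul_I_re t
    have h1 : z.re ^ 2 + z.im ^ 2 = 1 := by
      have := Complex.sq_norm z
      rw [habs] at this
      rw [Complex.normSq_apply] at this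
      nlinarith [this]
    have hd : ‖(z - 1 : ℂ)‖ ^ 2 = 2 - 2 * Real.cos t := by
      rw [Complex.sq_norm,
        Complex.normSq_apply]
      simp only [Complex.sub_re, Complex.sub_im, Complex.one_re, Complex.one_im]
      nlinarith [h1, hre]
    have hdpos : (0:ℝ) < 2 - 2 * Real.cos θ := by linarith
    have hne : z ≠ 1 := by
      intro h
      exact hzA ⟨0, by simpa using hθ0.le, by simp [h]⟩
    have hgeom : P.eval z = (z ^ m - 1) / (z - 1) := by
      simp only [hP, Polynomial.eval_finset_sum, Polynomial.eval_pow, Polynomial.eval_X]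
      exact geom_sum_eq hne m
    have hnum : ‖z ^ m - 1‖ ≤ 2 := by
      calc ‖z ^ m - 1‖ ≤ ‖z ^ m‖ + ‖(1:ℂ)‖ := norm_sub_le _ _
        _ = 2 := by
            rw [norm_pow]
            rw [habs]
            norm_num
    rw [hgeom, norm_div, div_pow]
    rw [hd]
    rw [hCdef]
    rw [div_le_div_iff₀ (by linarith) hC]
    have h4 : ‖z ^ m - 1‖ ^ 2 ≤ 4 := by nlinarith [hnum, norm_nonneg (z ^ m - 1)]
    nlinarith [h4, hC, hcost]
  have hcont : Continuous fun z : ℂ => ‖P.eval z‖ ^ 2 := by fun_prop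
  have hint : Integrable (fun z : ℂ => ‖P.eval z‖ ^ 2) (S.μ f) := by
    apply Integrable.mono' (integrable_const C) hcont.aestronglyMeasurable
    filter_upwards [hae] with z hz
    rw [Real.norm_eq_abs, abs_of_nonneg (by positivity)]
    exact hz
  have hI : ∫ z, ‖P.eval z‖ ^ 2 ∂(S.μ f) ≤ C * ‖f‖ ^ 2 := by
    calc ∫ z, ‖P.eval z‖ ^ 2 ∂(S.μ f) ≤ ∫ _, C ∂(S.μ f) :=
          integral_mono_ae hint (integrable_const C) hae
      _ = C * ‖f‖ ^ 2 := by
          rw [integral_const, measureReal_def, hμuniv, ENNReal.toReal_ofReal (by positivity), smul_eq_mul,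
            mul_comm]
  have hnormP : ‖Polynomial.aeval U P f‖ ^ 2 ≤ C * ‖f‖ ^ 2 := by
    rw [S.calc_poly P f]; exact hI
  have hmpos : (0:ℝ) < (m : ℝ) := by exact_mod_cast hm
  have hLHS : ‖(m : ℂ)⁻¹ • ∑ k ∈ Finset.range m, (U ^ k) f‖ ^ 2
      = ‖Polynomial.aeval U P f‖ ^ 2 / (m : ℝ) ^ 2 := by
    rw [norm_smul, hsum, norm_inv, Complex.norm_natCast]
    field_simp
  rw [hLHS]
  rw [div_le_div_iff₀ (by positivity) (by positivity)]
  calc ‖Polynomial.aeval U P f‖ ^ 2 * ((1 - Real.cos θ) * (m:ℝ) ^ 2)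
      ≤ (C * ‖f‖ ^ 2) * ((1 - Real.cos θ) * (m:ℝ) ^ 2) := by
        apply mul_le_mul_of_nonneg_right hnormP (by positivity)
    _ = 2 * ‖f‖ ^ 2 * (m:ℝ) ^ 2 := by
        rw [hCdef]; field_simp
end
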